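/- Fix i and let Ā_{ii} ∈ ℝ^{n_i×n_i}, and for j ≠ i let Ā_{ij} ∈ ℝ^{n_i×n_j} and let E_j = {x : H_j x ≤ 1} = {Ξ_j d : ‖d‖_∞ ≤ 1} be zonotopes with H_j of full column rank, left inverse H_j^♭, and ‖H_j Ξ_j‖_∞ = 1. Suppose there is no disturbance term, so that Ψ_i is the horizontal concatenation [Ā_{i j_1} Ξ_{j_1}, …, Ā_{i j_z} Ξ_{j_z}] over the parents j_1,…,j_z of i. If the series defining β_i := Σ_{j≠i} Σ_{k=0}^∞ ‖H_i Ā_{ii}^k Ā_{ij} H_j^♭‖_∞ converges, then γ_i := Σ_{k=0}^∞ ‖H_i Ā_{ii}^k Ψ_i‖_∞ ≤ β_i; in particular β_i < 1 implies γ_i < 1. -/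

import Mathlib

open scoped BigOperators Classical
open Matrix

noncomputable section

/-- Induced infinity norm of a real matrix. -/
def matInfNorm {m n : Type*} [Fintype m] [Fintype n] (A : Matrix m n ℝ) : ℝ :=
  ⨆ i, ∑ j, |A i j|

/-- Infinity norm of a vector. -/
def vecInfNorm {m : Type*} [Fintype m] (v : m → ℝ) : ℝ := ⨆ i, |v i|

/-- The matrix `Ψ i` in the disturbance-free case: horizontal concatenation of the
blocks `Ā_{ij} Ξ j` over the parents `j ≠ i` with `Ā_{ij} ≠ 0`. -/
def PsiMat0 {M : ℕ} {n nb : Fin M → ℕ}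
    (A : ∀ i j : Fin M, Matrix (Fin (n i)) (Fin (n j)) ℝ)
    (Ξ : ∀ i, Matrix (Fin (n i)) (Fin (nb i)) ℝ) (i : Fin M) :
    Matrix (Fin (n i)) (Σ j : {j : Fin M // j ≠ i ∧ A i j ≠ 0}, Fin (nb j.1)) ℝ :=
  Matrix.of fun row c => (A i c.1.1 * Ξ c.1.1) row c.2

/-! Since `H_j^♭ H_j = 1`, each block factors as `Ā_{ij} Ξ_j = (Ā_{ij} H_j^♭) (H_j Ξ_j)`, and
`‖H_j Ξ_j‖_∞ = 1`, so submultiplicativity of the induced norm bounds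
`‖C Ā_{ij} Ξ_j‖_∞ ≤ ‖C Ā_{ij} H_j^♭‖_∞` for every left factor `C = H_i Ā_{ii}^k`. The norm of a
horizontal concatenation is at most the sum of the norms of its blocks, so the `k`-th term of
`γ_i` is at most the `k`-th term of `β_i`, and comparison of nonnegative series concludes. -/

attribute [local instance] Matrix.linftyOpNormedAddCommGroup

section matInfNorm

variable {l m n : Type*}

lemma matInfNorm_eq_linfty_opNorm [Fintype m] [Fintype n] (A : Matrix m n ℝ) :
    matInfNorm A = ‖A‖ := by
  simp only [matInfNorm, linfty_opNorm_def, Finset.sup_univ_eq_ciSup, NNReal.coe_iSup,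
    NNReal.coe_sum, coe_nnnorm, Real.norm_eq_abs]

lemma matInfNorm_nonneg [Fintype m] [Fintype n] (A : Matrix m n ℝ) : 0 ≤ matInfNorm A := by
  rw [matInfNorm_eq_linfty_opNorm]
  exact norm_nonneg A

lemma matInfNorm_mul_le [Fintype l] [Fintype m] [Fintype n]
    (A : Matrix l m ℝ) (B : Matrix m n ℝ) :
    matInfNorm (A * B) ≤ matInfNorm A * matInfNorm B := by
  simpa only [matInfNorm_eq_linfty_opNorm] using linfty_opNorm_mul A B

lemma sum_abs_le_matInfNorm [Fintype m] [Fintype n] (A : Matrix m n ℝ) (r : m) :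
    ∑ j, |A r j| ≤ matInfNorm A :=
  le_ciSup (f := fun r => ∑ j, |A r j|) (Set.finite_range _).bddAbove r

lemma matInfNorm_mul_le_of_mul_eq_one {p q : Type*} [Fintype l] [Fintype m] [DecidableEq m]
    [Fintype p] [Fintype q]
    {C : Matrix l m ℝ} {Hflat : Matrix m p ℝ} {H : Matrix p m ℝ} {Ξ : Matrix m q ℝ}
    (hleft : Hflat * H = 1) (hHΞ : matInfNorm (H * Ξ) ≤ 1) :
    matInfNorm (C * Ξ) ≤ matInfNorm (C * Hflat) := by
  have hfactor : C * Ξ = C * Hflat * (H * Ξ) := by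
    rw [Matrix.mul_assoc, ← Matrix.mul_assoc Hflat, hleft, Matrix.one_mul]
  calc matInfNorm (C * Ξ)
      ≤ matInfNorm (C * Hflat) * matInfNorm (H * Ξ) := hfactor ▸ matInfNorm_mul_le _ _
    _ ≤ matInfNorm (C * Hflat) := mul_le_of_le_one_right (matInfNorm_nonneg _) hHΞ

variable {ι : Type*} {κ : ι → Type*}

lemma mul_of_sigma [Fintype m] (C : Matrix l m ℝ) (B : ∀ j, Matrix m (κ j) ℝ) :
    C * Matrix.of (fun r (c : Σ j, κ j) => B c.1 r c.2) =
      Matrix.of fun r (c : Σ j, κ j) => (C * B c.1) r c.2 := by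
  ext r c
  simp only [Matrix.mul_apply, Matrix.of_apply]

lemma matInfNorm_of_sigma_le [Fintype m] [Fintype ι] [∀ j, Fintype (κ j)]
    (B : ∀ j, Matrix m (κ j) ℝ) :
    matInfNorm (Matrix.of fun r (c : Σ j, κ j) => B c.1 r c.2) ≤ ∑ j, matInfNorm (B j) := by
  refine Real.iSup_le (fun r => ?_) (Finset.sum_nonneg fun j _ => matInfNorm_nonneg _)
  rw [Fintype.sum_sigma]
  exact Finset.sum_le_sum fun j _ => sum_abs_le_matInfNorm (B j) r

end matInfNorm

lemma matInfNorm_mul_PsiMat0_le {M : ℕ} {n τ nb : Fin M → ℕ}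
    {A : ∀ i j : Fin M, Matrix (Fin (n i)) (Fin (n j)) ℝ}
    {H : ∀ i, Matrix (Fin (τ i)) (Fin (n i)) ℝ} {Hflat : ∀ i, Matrix (Fin (n i)) (Fin (τ i)) ℝ}
    {Ξ : ∀ i, Matrix (Fin (n i)) (Fin (nb i)) ℝ}
    (hleft : ∀ j, Hflat j * H j = 1) (hHΞ : ∀ j, matInfNorm (H j * Ξ j) ≤ 1)
    {i : Fin M} {l : Type*} [Fintype l] (C : Matrix l (Fin (n i)) ℝ) :
    matInfNorm (C * PsiMat0 A Ξ i) ≤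
      ∑ j ∈ Finset.univ.erase i, matInfNorm (C * A i j * Hflat j) := by
  calc matInfNorm (C * PsiMat0 A Ξ i)
      ≤ ∑ j : {j // j ≠ i ∧ A i j ≠ 0}, matInfNorm (C * (A i j * Ξ j)) := by
        have h := matInfNorm_of_sigma_le fun j : {j // j ≠ i ∧ A i j ≠ 0} => C * (A i j * Ξ j)
        rwa [← mul_of_sigma C fun j : {j // j ≠ i ∧ A i j ≠ 0} => A i j * Ξ j] at h
    _ ≤ ∑ j : {j // j ≠ i ∧ A i j ≠ 0}, matInfNorm (C * A i j * Hflat j) :=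
        Finset.sum_le_sum fun j _ => by
          rw [← Matrix.mul_assoc]
          exact matInfNorm_mul_le_of_mul_eq_one (hleft j) (hHΞ j)
    _ = ∑ j ∈ Finset.univ.filter fun j => j ≠ i ∧ A i j ≠ 0, matInfNorm (C * A i j * Hflat j) :=
        (Finset.sum_subtype _ (fun j => by simp) fun j => matInfNorm (C * A i j * Hflat j)).symm
    _ ≤ ∑ j ∈ Finset.univ.erase i, matInfNorm (C * A i j * Hflat j) :=
        Finset.sum_le_sum_of_subset_of_nonneg
          (fun j hj => Finset.mem_erase.mpr ⟨(Finset.mem_filter.mp hj).2.1, Finset.mem_univ j⟩)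
          (fun j _ _ => matInfNorm_nonneg _)

lemma summable_and_tsum_le_sum_tsum {β ι : Type*} {s : Finset ι} {f : β → ℝ} {g : ι → β → ℝ}
    (hf : ∀ k, 0 ≤ f k) (hfg : ∀ k, f k ≤ ∑ j ∈ s, g j k) (hg : ∀ j ∈ s, Summable (g j)) :
    Summable f ∧ ∑' k, f k ≤ ∑ j ∈ s, ∑' k, g j k := by
  have hsum : Summable fun k => ∑ j ∈ s, g j k := summable_sum hg
  have hfs : Summable f := hsum.of_nonneg_of_le hf hfg
  refine ⟨hfs, ?_⟩
  calc ∑' k, f k ≤ ∑' k, ∑ j ∈ s, g j k := hfs.tsum_le_tsum hfg hsum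
    _ = ∑ j ∈ s, ∑' k, g j k := Summable.tsum_finsetSum hg

theorem gamma_le_beta_general
    (M : ℕ)
    (n τ nb : Fin M → ℕ)
    (A : ∀ i j : Fin M, Matrix (Fin (n i)) (Fin (n j)) ℝ)
    (H : ∀ i, Matrix (Fin (τ i)) (Fin (n i)) ℝ)
    (Hflat : ∀ i, Matrix (Fin (n i)) (Fin (τ i)) ℝ)
    (Ξ : ∀ i, Matrix (Fin (n i)) (Fin (nb i)) ℝ)
    (hleft : ∀ i, Hflat i * H i = 1)
    (hHXi : ∀ i, matInfNorm (H i * Ξ i) = 1)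
    (i : Fin M)
    (hbetaSummable : ∀ j, j ≠ i →
      Summable (fun k : ℕ => matInfNorm (H i * (A i i) ^ k * A i j * Hflat j))) :
    Summable (fun k : ℕ => matInfNorm (H i * (A i i) ^ k * PsiMat0 A Ξ i)) ∧
    ∑' k : ℕ, matInfNorm (H i * (A i i) ^ k * PsiMat0 A Ξ i)
      ≤ ∑ j ∈ Finset.univ.erase i, ∑' k : ℕ,
          matInfNorm (H i * (A i i) ^ k * A i j * Hflat j) :=
  summable_and_tsum_le_sum_tsum (fun _ => matInfNorm_nonneg _)
    (fun _ => matInfNorm_mul_PsiMat0_le hleft (fun j => (hHXi j).le) _)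
    (fun j hj => hbetaSummable j (Finset.ne_of_mem_erase hj))

/-- Remark 2: in the disturbance-free case, convergence of the series defining `β i`
implies that the series defining `γ i` converges with `γ i ≤ β i`; in particular
`β i < 1` implies `γ i < 1`. -/
theorem gamma_le_beta
    (M : ℕ)
    (n τ nb : Fin M → ℕ)
    (A : ∀ i j : Fin M, Matrix (Fin (n i)) (Fin (n j)) ℝ)
    (H : ∀ i, Matrix (Fin (τ i)) (Fin (n i)) ℝ)
    (Hflat : ∀ i, Matrix (Fin (n i)) (Fin (τ i)) ℝ)
    (Ξ : ∀ i, Matrix (Fin (n i)) (Fin (nb i)) ℝ)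
    (E : ∀ i, Set (Fin (n i) → ℝ))
    (hrank : ∀ i, (H i).rank = n i)
    (hleft : ∀ i, Hflat i * H i = 1)
    (hEdual : ∀ i, E i = {x | ∀ t, (H i).mulVec x t ≤ 1})
    (hEgen : ∀ i, E i = {x | ∃ d : Fin (nb i) → ℝ, vecInfNorm d ≤ 1 ∧ x = (Ξ i).mulVec d})
    (hHXi : ∀ i, matInfNorm (H i * Ξ i) = 1)
    (i : Fin M)
    (hbetaSummable : ∀ j, j ≠ i →
      Summable (fun k : ℕ => matInfNorm (H i * (A i i) ^ k * A i j * Hflat j))) :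
    Summable (fun k : ℕ => matInfNorm (H i * (A i i) ^ k * PsiMat0 A Ξ i)) ∧
    ∑' k : ℕ, matInfNorm (H i * (A i i) ^ k * PsiMat0 A Ξ i)
      ≤ ∑ j ∈ Finset.univ.erase i, ∑' k : ℕ,
          matInfNorm (H i * (A i i) ^ k * A i j * Hflat j) :=
  gamma_le_beta_general M n τ nb A H Hflat Ξ hleft hHXi i hbetaSummable
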